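/- Let α ∈ 𝔇^{(z)}_{σ₁,σ₂}(W), u ∈ V^{(j₁,j₂)}, v ∈ V^{(r₁,r₂)} (j₁,j₂,r₁,r₂ ∈ ℤ), and n ∈ ℤ. Then there exists k ∈ ℕ such that (x₁−z)^{k+j₁/T}(x₂−z)^{n+r₁/T} Y_W^*(u,x₁)Y_W^*(v,x₂)α ∈ x₂^{−r₂/T} x₁^{−j₂/T} W^*((x₁))[[x₂, x₂^{-1}]]. Furthermore, x^{r₂/T}(x−z)^{n+r₁/T} Y_W^*(v,x)α ∈ 𝔇^{(z)}_{σ₁,σ₂}(W)[[x, x^{-1}]], i.e., every coefficient of this series lies in 𝔇^{(z)}_{σ₁,σ₂}(W). -/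

import Mathlib

open scoped BigOperators

noncomputable section

/-- The generalized binomial coefficient `binom(a, n)` for `a : ℂ`, `n : ℕ`. -/
def cbinom (a : ℂ) (n : ℕ) : ℂ := (∏ i ∈ Finset.range n, (a - (i : ℂ))) / (n.factorial : ℂ)

/-- The argument of a complex number normalized to lie in `[0, 2π)`. -/
def argB (ξ : ℂ) : ℝ := if 0 ≤ Complex.arg ξ then Complex.arg ξ else Complex.arg ξ + 2 * Real.pi

/-- The branch of the logarithm with `log ξ = ln |ξ| + i arg ξ`, `0 ≤ arg ξ < 2π`. -/
def logB (ξ : ℂ) : ℂ := (Real.log ‖ξ‖ : ℂ) + (argB ξ : ℂ) * Complex.I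

/-- `ξ ^ α = e^{α log ξ}` with the chosen branch of `log`. -/
def bpow (ξ α : ℂ) : ℂ := Complex.exp (α * logB ξ)

/-- `e^{α π i}`. -/
def epi (α : ℂ) : ℂ := Complex.exp (α * (Real.pi : ℂ) * Complex.I)

/-!  Formal series are recorded by the coefficient function `f : ℂ → ·`, where `f n` is the
coefficient of `x^{-n-1}`.  The following are the coefficients of the products with
`(x-z)^β`, `(z-x)^β`, `(x+z)^β`, `(z+x)^β` (with the expansion conventions
`(x ± ξ)^β = Σ_{j≥0} binom(β,j) (±ξ)^j x^{β-j}` and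
`(ξ ± x)^β = Σ_{j≥0} binom(β,j) ξ^{β-j} (±x)^j`, where `ξ^γ` uses the chosen branch),
and of the substitution `f(x+z)`. -/

/-- Coefficient of `x^{-n-1}` in `(x-z)^β f(x)`. -/
def mulXZ (z β : ℂ) (f : ℂ → ℂ) (n : ℂ) : ℂ :=
  ∑ᶠ i : ℕ, cbinom β i * (-z) ^ i * f (n + β - (i : ℂ))

/-- Coefficient of `x^{-n-1}` in `(z-x)^β f(x)`. -/
def mulZX (z β : ℂ) (f : ℂ → ℂ) (n : ℂ) : ℂ :=
  ∑ᶠ i : ℕ, cbinom β i * bpow z (β - (i : ℂ)) * (-1 : ℂ) ^ i * f (n + (i : ℂ))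

/-- Coefficient of `x^{-n-1}` in `(x+z)^β f(x)`. -/
def mulXpZ (z β : ℂ) (f : ℂ → ℂ) (n : ℂ) : ℂ :=
  ∑ᶠ i : ℕ, cbinom β i * z ^ i * f (n + β - (i : ℂ))

/-- Coefficient of `x^{-n-1}` in `(z+x)^β f(x)`. -/
def mulZpX (z β : ℂ) (f : ℂ → ℂ) (n : ℂ) : ℂ :=
  ∑ᶠ i : ℕ, cbinom β i * bpow z (β - (i : ℂ)) * f (n + (i : ℂ))

/-- Coefficient of `x^{-n-1}` in `f(x+z) = (e^{z d/dx} f)(x)`. -/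
def substZ (z : ℂ) (f : ℂ → ℂ) (n : ℂ) : ℂ :=
  ∑ᶠ i : ℕ, cbinom ((i : ℂ) - n - 1) i * z ^ i * f (n - (i : ℂ))

/-- A vertex algebra over `ℂ`, presented by its components `Y u n = u_n`, with the
Jacobi identity in (componentwise) Borcherds form. -/
structure VertexAlg (V : Type*) [AddCommGroup V] [Module ℂ V] where
  Y : V →ₗ[ℂ] ℤ → V →ₗ[ℂ] V
  one : V
  trunc : ∀ u v : V, ∃ N : ℤ, ∀ n : ℤ, N ≤ n → Y u n v = 0
  vacuum_eq : ∀ (n : ℤ) (v : V), Y one n v = if n = -1 then v else 0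
  create : ∀ (u : V) (n : ℤ), 0 ≤ n → Y u n one = 0
  create' : ∀ u : V, Y u (-1) one = u
  jacobi : ∀ (u v w : V) (a b c : ℤ),
    (∑ᶠ i : ℕ, ((-1 : ℂ) ^ i * cbinom (a : ℂ) i) •
      (Y u (a + b - (i : ℤ)) (Y v (c + (i : ℤ)) w)
        - ((-1 : ℂ) ^ a) • Y v (a + c - (i : ℤ)) (Y u (b + (i : ℤ)) w)))
    = ∑ᶠ i : ℕ, cbinom (b : ℂ) i • Y (Y u (a + (i : ℤ)) v) (b + c - (i : ℤ)) w

/-- An automorphism of a vertex algebra. -/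
structure VAAut {V : Type*} [AddCommGroup V] [Module ℂ V] (A : VertexAlg V) where
  g : V ≃ₗ[ℂ] V
  map_one : g A.one = A.one
  map_Y : ∀ (u : V) (n : ℤ) (v : V), g (A.Y u n v) = A.Y (g u) n (g v)

/-- `v` lies in the eigenspace `V^j = {v | σ v = e^{2πij/T} v}`. -/
def eig {V : Type*} [AddCommGroup V] [Module ℂ V] {A : VertexAlg V}
    (σ : VAAut A) (T : ℕ) (j : ℤ) (v : V) : Prop :=
  σ.g v = Complex.exp (2 * (Real.pi : ℂ) * Complex.I * (j : ℂ) / (T : ℂ)) • v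

/-- A (weak) `σ`-twisted module for a vertex algebra, presented componentwise:
`Y v n` is the coefficient of `x^{-n-1}` in `Y_W(v,x)`; the `σ`-twisted Jacobi
identity is stated coefficientwise. -/
structure TwistedModule {V : Type*} [AddCommGroup V] [Module ℂ V]
    (W : Type*) [AddCommGroup W] [Module ℂ W]
    (A : VertexAlg V) (σ : VAAut A) (T : ℕ) where
  Y : V →ₗ[ℂ] ℂ → W →ₗ[ℂ] W
  vacuum_eq : ∀ (n : ℂ) (w : W), Y A.one n w = if n = -1 then w else 0
  latt : ∀ (v : V) (n : ℂ), (∀ m : ℤ, n ≠ (m : ℂ) / (T : ℂ)) → Y v n = 0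
  eig_supp : ∀ (j : ℤ) (v : V), eig σ T j v →
    ∀ n : ℂ, (∀ m : ℤ, n ≠ (j : ℂ) / (T : ℂ) + (m : ℂ)) → Y v n = 0
  trunc : ∀ (v : V) (w : W), ∃ N : ℤ, ∀ m : ℤ, N ≤ m → Y v ((m : ℂ) / (T : ℂ)) w = 0
  jacobi : ∀ (j : ℤ) (u : V), eig σ T j u → ∀ (v : V) (w : W) (a b c : ℤ),
    (∑ᶠ i : ℕ, ((-1 : ℂ) ^ i * cbinom (a : ℂ) i) •
      (Y u ((a : ℂ) + (b : ℂ) / (T : ℂ) - (i : ℂ)) (Y v ((c : ℂ) / (T : ℂ) + (i : ℂ)) w)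
        - ((-1 : ℂ) ^ a) •
          Y v ((a : ℂ) + (c : ℂ) / (T : ℂ) - (i : ℂ)) (Y u ((b : ℂ) / (T : ℂ) + (i : ℂ)) w)))
    = if (T : ℤ) ∣ (b - j) then
        (∑ᶠ i : ℕ, cbinom ((b : ℂ) / (T : ℂ)) i •
          Y (A.Y u (a + (i : ℤ)) v) ((b : ℂ) / (T : ℂ) + (c : ℂ) / (T : ℂ) - (i : ℂ)) w)
      else 0

/-- A right `σ`-twisted module for a vertex algebra, presented componentwise
(opposite twisted Jacobi identity, coefficientwise). -/
structure RightTwistedModule {V : Type*} [AddCommGroup V] [Module ℂ V]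
    (W : Type*) [AddCommGroup W] [Module ℂ W]
    (A : VertexAlg V) (σ : VAAut A) (T : ℕ) where
  Y : V →ₗ[ℂ] ℂ → W →ₗ[ℂ] W
  vacuum_eq : ∀ (n : ℂ) (w : W), Y A.one n w = if n = -1 then w else 0
  latt : ∀ (v : V) (n : ℂ), (∀ m : ℤ, n ≠ (m : ℂ) / (T : ℂ)) → Y v n = 0
  trunc : ∀ (v : V) (w : W), ∃ N : ℤ, ∀ m : ℤ, m ≤ N → Y v ((m : ℂ) / (T : ℂ)) w = 0
  jacobi : ∀ (j : ℤ) (u : V), eig σ T j u → ∀ (v : V) (w : W) (a b c : ℤ),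
    (∑ᶠ i : ℕ, ((-1 : ℂ) ^ i * cbinom (a : ℂ) i) •
      (Y v ((c : ℂ) / (T : ℂ) + (i : ℂ)) (Y u ((a : ℂ) + (b : ℂ) / (T : ℂ) - (i : ℂ)) w)
        - ((-1 : ℂ) ^ a) •
          Y u ((b : ℂ) / (T : ℂ) + (i : ℂ)) (Y v ((a : ℂ) + (c : ℂ) / (T : ℂ) - (i : ℂ)) w)))
    = if (T : ℤ) ∣ (b + j) then
        (∑ᶠ i : ℕ, cbinom ((b : ℂ) / (T : ℂ)) i •
          Y (A.Y u (a + (i : ℤ)) v) ((b : ℂ) / (T : ℂ) + (c : ℂ) / (T : ℂ) - (i : ℂ)) w)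
      else 0

section DualSetup

variable {V : Type*} [AddCommGroup V] [Module ℂ V] {W : Type*} [AddCommGroup W] [Module ℂ W]
variable {A : VertexAlg V}

/-- The series `Y_W^*(v,x)α` paired with `w ∈ W`:  `m ↦ ⟨α, (Y_W v)_m w⟩`. -/
def Ydual (YW : V →ₗ[ℂ] ℂ → W →ₗ[ℂ] W) (v : V) (α : W → ℂ) (w : W) : ℂ → ℂ :=
  fun m => α (YW v m w)

/-- The condition `x^{j₂/T}(x-z)^{k+j₁/T} Y_W^*(v,x)α ∈ W^*((x))` (integer exponents and
lower truncation in `x`, uniformly in `w`). -/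
def DCond (T : ℕ) (z : ℂ) (j₁ j₂ : ℤ) (YW : V →ₗ[ℂ] ℂ → W →ₗ[ℂ] W)
    (v : V) (α : W → ℂ) (k : ℕ) : Prop :=
  (∀ n : ℂ, (∀ m : ℤ, n ≠ (m : ℂ)) → ∀ w : W,
    mulXZ z ((k : ℂ) + (j₁ : ℂ) / (T : ℂ)) (Ydual YW v α w) (n + (j₂ : ℂ) / (T : ℂ)) = 0) ∧
  (∃ N : ℤ, ∀ m : ℤ, N ≤ m → ∀ w : W,
    mulXZ z ((k : ℂ) + (j₁ : ℂ) / (T : ℂ)) (Ydual YW v α w) ((m : ℂ) + (j₂ : ℂ) / (T : ℂ)) = 0)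

/-- The space `𝔇^{(z)}_{σ₁,σ₂}(W) ⊆ W^*`:  linear functionals `α` such that for every
`v ∈ V^{(j₁,j₂)}` there is `k ∈ ℕ` with `x^{j₂/T}(x-z)^{k+j₁/T} Y_W^*(v,x)α ∈ W^*((x))`. -/
def Dspace (σ₁ σ₂ : VAAut A) (T : ℕ) (YW : V →ₗ[ℂ] ℂ → W →ₗ[ℂ] W) (z : ℂ) :
    Set (W → ℂ) :=
  { α | IsLinearMap ℂ α ∧ ∀ (j₁ j₂ : ℤ) (v : V), eig σ₁ T j₁ v → eig σ₂ T j₂ v →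
      ∃ k : ℕ, DCond T z j₁ j₂ YW v α k }

/-- `YR` is the operation `Y_σ^R` on `𝔇^{(z)}_{σ₁,σ₂}(W)`:  it is linear in `v`, for
`v ∈ V^{(j₁,j₂)}` and `α ∈ 𝔇` the series `Y_σ^R(v,x)α` has exponent support in
`x^{-j₂/T}(·)((x))`-form, and for every admissible `k ∈ ℕ`
`e^{(k+j₁/T)πi}(z-x)^{k+j₁/T} Y_σ^R(v,x)α = (x-z)^{k+j₁/T} Y_W^*(v,x)α`. -/
def IsYR (σ₁ σ₂ : VAAut A) (T : ℕ) (YW : V →ₗ[ℂ] ℂ → W →ₗ[ℂ] W) (z : ℂ)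
    (YR : V → ℂ → (W → ℂ) → W → ℂ) : Prop :=
  (∀ (n : ℂ) (α : W → ℂ), IsLinearMap ℂ fun v => YR v n α) ∧
  (∀ (j₁ j₂ : ℤ) (v : V), eig σ₁ T j₁ v → eig σ₂ T j₂ v →
    ∀ α ∈ Dspace σ₁ σ₂ T YW z,
      (∀ n : ℂ, (∀ m : ℤ, n ≠ (j₂ : ℂ) / (T : ℂ) + (m : ℂ)) → YR v n α = 0) ∧
      (∃ N : ℤ, ∀ m : ℤ, N ≤ m → YR v ((j₂ : ℂ) / (T : ℂ) + (m : ℂ)) α = 0) ∧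
      (∀ k : ℕ, DCond T z j₁ j₂ YW v α k → ∀ (n : ℂ) (w : W),
        epi ((k : ℂ) + (j₁ : ℂ) / (T : ℂ)) *
            mulZX z ((k : ℂ) + (j₁ : ℂ) / (T : ℂ)) (fun m => YR v m α w) n
          = mulXZ z ((k : ℂ) + (j₁ : ℂ) / (T : ℂ)) (Ydual YW v α w) n))

/-- The condition `x^{j₁/T}(x+z)^{l+j₂/T} Y_W^*(v,x+z)α ∈ W^*((x))`. -/
def LCond (T : ℕ) (z : ℂ) (j₁ j₂ : ℤ) (YW : V →ₗ[ℂ] ℂ → W →ₗ[ℂ] W)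
    (v : V) (α : W → ℂ) (l : ℕ) : Prop :=
  (∀ n : ℂ, (∀ m : ℤ, n ≠ (m : ℂ)) → ∀ w : W,
    mulXpZ z ((l : ℂ) + (j₂ : ℂ) / (T : ℂ)) (substZ z (Ydual YW v α w))
      (n + (j₁ : ℂ) / (T : ℂ)) = 0) ∧
  (∃ N : ℤ, ∀ m : ℤ, N ≤ m → ∀ w : W,
    mulXpZ z ((l : ℂ) + (j₂ : ℂ) / (T : ℂ)) (substZ z (Ydual YW v α w))
      ((m : ℂ) + (j₁ : ℂ) / (T : ℂ)) = 0)

/-- `YL` is the operation `Y_σ^L` on `𝔇^{(z)}_{σ₁,σ₂}(W)`:  linear in `v`, with exponent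
support in `x^{-j₁/T}(·)((x))`-form, and
`(z+x)^{l+j₂/T} Y_σ^L(v,x)α = (x+z)^{l+j₂/T} Y_W^*(v,x+z)α` for every admissible `l ∈ ℕ`. -/
def IsYL (σ₁ σ₂ : VAAut A) (T : ℕ) (YW : V →ₗ[ℂ] ℂ → W →ₗ[ℂ] W) (z : ℂ)
    (YL : V → ℂ → (W → ℂ) → W → ℂ) : Prop :=
  (∀ (n : ℂ) (α : W → ℂ), IsLinearMap ℂ fun v => YL v n α) ∧
  (∀ (j₁ j₂ : ℤ) (v : V), eig σ₁ T j₁ v → eig σ₂ T j₂ v →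
    ∀ α ∈ Dspace σ₁ σ₂ T YW z,
      (∀ n : ℂ, (∀ m : ℤ, n ≠ (j₁ : ℂ) / (T : ℂ) + (m : ℂ)) → YL v n α = 0) ∧
      (∃ N : ℤ, ∀ m : ℤ, N ≤ m → YL v ((j₁ : ℂ) / (T : ℂ) + (m : ℂ)) α = 0) ∧
      (∀ l : ℕ, LCond T z j₁ j₂ YW v α l → ∀ (n : ℂ) (w : W),
        mulZpX z ((l : ℂ) + (j₂ : ℂ) / (T : ℂ)) (fun m => YL v m α w) n
          = mulXpZ z ((l : ℂ) + (j₂ : ℂ) / (T : ℂ)) (substZ z (Ydual YW v α w)) n))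

end DualSetup

/-!
For `b ∈ (j₁+j₂)/T + ℤ` the commutator formula of the right twisted module gives
`⟨α, v_c u_b w⟩ = ⟨α, u_b v_c w⟩ + Σ_l binom(b,l) ⟨α, (u_l v)_{b+c-l} w⟩`, a finite sum since
`u_l v = 0` for large `l`. After multiplying by `(x₁-z)^κ (x₂-z)^ν`, `κ = k + j₁/T`,
`ν = n + r₁/T`, the first term is truncated in `x₁` by the defining property of `α ∈ 𝔇` for `u`.
In the `l`-th correction term the factor `binom(b,l)` at `b = X + κ - i` (`X` the index in
`x₁`) is split by Chu–Vandermonde, and `binom(κ,i) binom(κ-i,t) = binom(κ,t) binom(κ-t,i)`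
regroups the term into `Σ_{t ≤ l} binom(κ,t) binom(X,l-t)` times coefficients of
`(x-z)^{κ-t+ν} Y_W^*(u_l v,x)α`, where `κ - t + ν = (k+n-t) + (j₁+r₁)/T`. Since
`u_l v ∈ V^{(j₁+r₁, j₂+r₂)}`, this is truncated as soon as `k + n - t` is large. Only finitely
many `l` and `t ≤ l` occur, so a single `k` works. Letting `u` range over all eigenvectors then
shows that the coefficients of `x^{r₂/T}(x-z)^ν Y_W^*(v,x)α` lie in `𝔇`.
-/

open Filter Finset Function

theorem cbinom_eq_choose (a : ℂ) (n : ℕ) : cbinom a n = Ring.choose a n := by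
  rw [Ring.choose_eq_smul, cbinom, smul_eq_mul, div_eq_inv_mul]
  congr 1
  induction n with
  | zero => simp
  | succ n ih =>
    rw [descPochhammer_succ_right, Polynomial.smeval_mul, ← ih, prod_range_succ]
    simp [Polynomial.smeval_sub, Polynomial.smeval_X, Polynomial.smeval_natCast]

theorem cbinom_zero_right (a : ℂ) : cbinom a 0 = 1 := by
  simp [cbinom]

theorem cbinom_natCast_of_lt {d i : ℕ} (h : d < i) : cbinom d i = 0 := by
  rw [cbinom_eq_choose, Ring.choose_natCast, Nat.choose_eq_zero_of_lt h, Nat.cast_zero]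

theorem cbinom_add (x y : ℂ) (r : ℕ) :
    cbinom (x + y) r = ∑ p ∈ antidiagonal r, cbinom x p.1 * cbinom y p.2 := by
  simp only [cbinom_eq_choose]
  exact Ring.add_choose_eq r (Commute.all x y)

theorem cbinom_mul_cbinom_sub (a : ℂ) (i t : ℕ) :
    cbinom a i * cbinom (a - i) t = cbinom a t * cbinom (a - t) i := by
  have key (i t : ℕ) : cbinom a i * cbinom (a - i) t = (i + t).choose i * cbinom a (i + t) := by
    simp only [cbinom_eq_choose]
    rw [← nsmul_eq_mul, Ring.choose_smul_choose a (Nat.le_add_right i t), Nat.add_sub_cancel_left]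
  rw [key, key, add_comm t i, Nat.choose_symm_add]

theorem finsum_eq_sum_range_of_forall_le {M : Type*} [AddCommMonoid M] {f : ℕ → M} {N : ℕ}
    (h : ∀ i, N ≤ i → f i = 0) : ∑ᶠ i, f i = ∑ i ∈ range N, f i :=
  finsum_eq_sum_of_support_subset f fun i hi => by
    simpa using mt (h i) hi

theorem sum_range_sum_range_eq_sum_antidiagonal {M : Type*} [AddCommMonoid M] {N : ℕ}
    {φ : ℕ → ℕ → M} (h : ∀ i j, N ≤ i + j → φ i j = 0) :
    ∑ i ∈ range N, ∑ j ∈ range N, φ i j = ∑ r ∈ range N, ∑ p ∈ antidiagonal r, φ p.1 p.2 := by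
  simp only [Nat.sum_antidiagonal_eq_sum_range_succ φ, sum_range_diag_flip]
  refine sum_congr rfl fun i _ => (sum_subset (range_subset_range.2 (Nat.sub_le N i)) ?_).symm
  intro j _ hj
  exact h i j (by simp at hj; omega)

/-- Coefficient functions whose series has, in each class `x^{c+ℤ}`, exponents bounded above;
on these, `mulXZ` is a finite sum and behaves like multiplication of series. -/
def lowerTrunc : Submodule ℂ (ℂ → ℂ) where
  carrier := {f | ∀ c : ℂ, ∀ᶠ i : ℕ in atTop, f (c - i) = 0}
  zero_mem' _ := Eventually.of_forall fun _ => rfl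
  add_mem' hf hg c := ((hf c).and (hg c)).mono fun _ h => by simp [h.1, h.2]
  smul_mem' a _ hf c := (hf c).mono fun _ h => by simp [h]

theorem mul_mem_lowerTrunc (g : ℂ → ℂ) {f : ℂ → ℂ} (hf : f ∈ lowerTrunc) :
    (fun c => g c * f c) ∈ lowerTrunc :=
  fun c => (hf c).mono fun _ h => by simp [h]

theorem comp_add_mem_lowerTrunc {f : ℂ → ℂ} (hf : f ∈ lowerTrunc) (s : ℂ) :
    (fun c => f (c + s)) ∈ lowerTrunc :=
  fun c => (hf (c + s)).mono fun i h => by simpa only [sub_add_eq_add_sub] using h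

theorem sum_mem_lowerTrunc {ι : Type*} {s : Finset ι} {F : ι → ℂ → ℂ}
    (hF : ∀ j ∈ s, F j ∈ lowerTrunc) : (fun c => ∑ j ∈ s, F j c) ∈ lowerTrunc := by
  simpa only [← Finset.sum_fn] using Submodule.sum_mem _ hF

section mulXZ

variable {z β γ : ℂ} {f g : ℂ → ℂ} {n : ℂ}

theorem mulXZ_congr (h : ∀ i : ℕ, f (n + β - i) = g (n + β - i)) :
    mulXZ z β f n = mulXZ z β g n :=
  finsum_congr fun i => by rw [h]

theorem mulXZ_eq_zero (h : ∀ i : ℕ, f (n + β - i) = 0) : mulXZ z β f n = 0 :=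
  finsum_eq_zero_of_forall_eq_zero fun i => by rw [h, mul_zero]

theorem mulXZ_eq_sum_range {N : ℕ} (h : ∀ i, N ≤ i → f (n + β - i) = 0) :
    mulXZ z β f n = ∑ i ∈ range N, cbinom β i * (-z) ^ i * f (n + β - i) :=
  finsum_eq_sum_range_of_forall_le fun i hi => by rw [h i hi, mul_zero]

theorem mulXZ_natCast_eq_zero {d : ℕ} (h : ∀ i ≤ d, g (n + d - i) = 0) :
    mulXZ z d g n = 0 :=
  finsum_eq_zero_of_forall_eq_zero fun i => by
    rcases le_or_gt i d with hi | hi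
    · rw [h i hi, mul_zero]
    · rw [cbinom_natCast_of_lt hi, zero_mul, zero_mul]

theorem mulXZ_comp_add (s : ℂ) : mulXZ z β (fun c => f (c + s)) n = mulXZ z β f (n + s) :=
  finsum_congr fun i => by dsimp only; rw [show n + β - i + s = n + s + β - i by ring]

theorem mulXZ_const_mul (a : ℂ) : mulXZ z β (fun c => a * f c) n = a * mulXZ z β f n := by
  rw [mulXZ, mulXZ, mul_finsum]
  exact finsum_congr fun i => by ring

theorem hasFiniteSupport_mulXZ_term (hf : f ∈ lowerTrunc) (z β n : ℂ) :
    HasFiniteSupport fun i : ℕ => cbinom β i * (-z) ^ i * f (n + β - i) := by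
  obtain ⟨N, hN⟩ := eventually_atTop.1 (hf (n + β))
  refine (Set.finite_lt_nat N).subset fun i hi => ?_
  by_contra hiN
  exact hi (by simp only [hN i (not_lt.1 hiN), mul_zero])

theorem mulXZ_add (hf : f ∈ lowerTrunc) (hg : g ∈ lowerTrunc) :
    mulXZ z β (fun c => f c + g c) n = mulXZ z β f n + mulXZ z β g n := by
  rw [mulXZ, mulXZ, mulXZ, ← finsum_add_distrib (hasFiniteSupport_mulXZ_term hf z β n)
    (hasFiniteSupport_mulXZ_term hg z β n)]
  simp only [mul_add]

theorem mulXZ_sum {ι : Type*} {s : Finset ι} {F : ι → ℂ → ℂ}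
    (hF : ∀ j ∈ s, F j ∈ lowerTrunc) :
    mulXZ z β (fun c => ∑ j ∈ s, F j c) n = ∑ j ∈ s, mulXZ z β (F j) n := by
  simp only [mulXZ, mul_sum]
  exact (sum_finsum_comm s _ fun j hj => hasFiniteSupport_mulXZ_term (hF j hj) z β n).symm

theorem mulXZ_mem_lowerTrunc (hf : f ∈ lowerTrunc) : mulXZ z β f ∈ lowerTrunc := by
  intro c
  obtain ⟨N, hN⟩ := eventually_atTop.1 (hf (c + β))
  filter_upwards [eventually_ge_atTop N] with i hi
  refine mulXZ_eq_zero fun j => ?_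
  rw [← hN (i + j) (by omega)]
  push_cast
  ring_nf

theorem mulXZ_mulXZ (hf : f ∈ lowerTrunc) :
    mulXZ z β (mulXZ z γ f) n = mulXZ z (β + γ) f n := by
  obtain ⟨N, hN⟩ := eventually_atTop.1 (hf (n + β + γ))
  have harg (i j : ℕ) : n + β - i + γ - j = n + β + γ - ((i + j : ℕ) : ℂ) := by push_cast; ring
  have hinner (i : ℕ) : mulXZ z γ f (n + β - i) = ∑ j ∈ range N,
      cbinom γ j * (-z) ^ j * f (n + β + γ - ((i + j : ℕ) : ℂ)) := by
    rw [mulXZ_eq_sum_range (N := N) fun j hj => by rw [harg, hN _ (by omega)]]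
    simp only [harg]
  rw [mulXZ_eq_sum_range (N := N) fun i hi => mulXZ_eq_zero fun j => by
      rw [harg, hN _ (by omega)],
    mulXZ_eq_sum_range (N := N) fun r hr => by rw [← add_assoc, hN r hr]]
  simp only [hinner, mul_sum, cbinom_add, sum_mul]
  rw [sum_range_sum_range_eq_sum_antidiagonal fun i j hij => by rw [hN _ hij]; ring]
  refine sum_congr rfl fun r _ => sum_congr rfl fun p hp => ?_
  rw [← mem_antidiagonal.1 hp, pow_add, add_assoc n]
  ring

theorem mulXZ_fun_mem_lowerTrunc {n₂ : ℂ} {H : ℂ → ℂ → ℂ}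
    (hH : ∀ c, (fun b => H b c) ∈ lowerTrunc)
    (hH' : ∀ᶠ i : ℕ in atTop, ∀ b, H b (n₂ + γ - i) = 0) :
    (fun b => mulXZ z γ (H b) n₂) ∈ lowerTrunc := by
  obtain ⟨N, hN⟩ := eventually_atTop.1 hH'
  rw [funext fun b => mulXZ_eq_sum_range (f := H b) fun i hi => hN i hi b]
  exact sum_mem_lowerTrunc fun i _ => mul_mem_lowerTrunc _ (hH _)

theorem mulXZ_comm {H : ℂ → ℂ → ℂ} {n₁ n₂ : ℂ} (hH : ∀ c, (fun b => H b c) ∈ lowerTrunc)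
    (hH' : ∀ᶠ i : ℕ in atTop, ∀ b, H b (n₂ + γ - i) = 0) :
    mulXZ z β (fun b => mulXZ z γ (H b) n₂) n₁
      = mulXZ z γ (fun c => mulXZ z β (fun b => H b c) n₁) n₂ := by
  obtain ⟨N, hN⟩ := eventually_atTop.1 hH'
  calc mulXZ z β (fun b => mulXZ z γ (H b) n₂) n₁
      = mulXZ z β (fun b => ∑ i ∈ range N, cbinom γ i * (-z) ^ i * H b (n₂ + γ - i)) n₁ :=
        mulXZ_congr fun j => mulXZ_eq_sum_range (f := H _) fun i hi => hN i hi _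
    _ = ∑ i ∈ range N, cbinom γ i * (-z) ^ i * mulXZ z β (fun b => H b (n₂ + γ - i)) n₁ := by
        rw [mulXZ_sum fun i _ => mul_mem_lowerTrunc _ (hH _)]
        simp only [mulXZ_const_mul]
    _ = mulXZ z γ (fun c => mulXZ z β (fun b => H b c) n₁) n₂ :=
        (mulXZ_eq_sum_range (f := fun c => mulXZ z β (fun b => H b c) n₁)
          fun i hi => mulXZ_eq_zero fun j => hN i hi _).symm

theorem mulXZ_cbinom_sub_mul (X : ℂ) (t : ℕ) :
    mulXZ z β (fun b => cbinom (b - X) t * f b) X = cbinom β t * mulXZ z (β - t) f (X + t) := by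
  rw [mulXZ, mulXZ, mul_finsum]
  refine finsum_congr fun i => ?_
  have hb : X + β - i - X = β - i := by ring
  have harg : X + t + (β - t) - i = X + β - i := by ring
  rw [hb, harg]
  linear_combination (-z) ^ i * f (X + β - i) * cbinom_mul_cbinom_sub β i t

theorem mulXZ_cbinom_mul (hf : f ∈ lowerTrunc) (X : ℂ) (l : ℕ) :
    mulXZ z β (fun b => cbinom b l * f b) X
      = ∑ p ∈ antidiagonal l, cbinom X p.2 * (cbinom β p.1 * mulXZ z (β - p.1) f (X + p.1)) := by
  have hsplit (b : ℂ) : cbinom b l * f b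
      = ∑ p ∈ antidiagonal l, cbinom X p.2 * (cbinom (b - X) p.1 * f b) := by
    rw [← sub_add_cancel b X, cbinom_add, sum_mul, add_sub_cancel_right]
    exact sum_congr rfl fun p _ => by ring
  simp only [hsplit]
  rw [mulXZ_sum fun p _ => mul_mem_lowerTrunc _ (mul_mem_lowerTrunc _ hf)]
  simp only [mulXZ_const_mul, mulXZ_cbinom_sub_mul]

end mulXZ

def OnCoset (T : ℕ) (j : ℤ) (c : ℂ) : Prop := ∃ m : ℤ, c = (j : ℂ) / T + m

section Eigen

variable {V : Type*} [AddCommGroup V] [Module ℂ V] {A : VertexAlg V} {T : ℕ}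

theorem eig_neg_add_of_comp_eq_id {σ₁ σ₂ σ : VAAut A} (hσ : ∀ v : V, σ.g (σ₁.g (σ₂.g v)) = v)
    {j₁ j₂ : ℤ} {u : V} (h₁ : eig σ₁ T j₁ u) (h₂ : eig σ₂ T j₂ u) :
    eig σ T (-(j₁ + j₂)) u := by
  have h := hσ u
  rw [h₂, map_smul, h₁, smul_smul, map_smul, ← Complex.exp_add,
    ← eq_inv_smul_iff₀ (Complex.exp_ne_zero _), ← Complex.exp_neg] at h
  rw [eig, h]
  congr 2
  push_cast
  ring

theorem eig_Y {σ : VAAut A} {a b : ℤ} {x y : V} (hx : eig σ T a x) (hy : eig σ T b y) (l : ℤ) :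
    eig σ T (a + b) (A.Y x l y) := by
  rw [eig, σ.map_Y, hx, hy, map_smul, map_smul, Pi.smul_apply, LinearMap.smul_apply, smul_smul,
    ← Complex.exp_add]
  congr 2
  push_cast
  ring

end Eigen

namespace RightTwistedModule

variable {V : Type*} [AddCommGroup V] [Module ℂ V] {W : Type*} [AddCommGroup W] [Module ℂ W]
  {A : VertexAlg V} {σ : VAAut A} {T : ℕ} (M : RightTwistedModule W A σ T)

theorem Y_div_eq_zero_of_not_dvd {j : ℤ} {u : V} (hu : eig σ T j u) {b : ℤ}
    (hb : ¬ (T : ℤ) ∣ b + j) (w : W) : M.Y u (b / T) w = 0 := by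
  have h := M.jacobi j u hu A.one w (-1) b 0
  rw [if_neg hb, finsum_eq_single _ 0 fun i hi => ?_] at h
  · simpa [M.vacuum_eq, cbinom_zero_right] using h
  · have hi' : (i : ℂ) ≠ -1 := by exact_mod_cast (by omega : (i : ℤ) ≠ -1)
    simp [M.vacuum_eq, hi, hi']

theorem Y_eq_zero_of_not_onCoset (hT : 0 < T) {j : ℤ} {u : V} (hu : eig σ T (-j) u) {c : ℂ}
    (hc : ¬ OnCoset T j c) : M.Y u c = 0 := by
  have hT' : (T : ℂ) ≠ 0 := by exact_mod_cast hT.ne'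
  by_cases hlat : ∃ b : ℤ, c = b / T
  · obtain ⟨b, rfl⟩ := hlat
    ext w
    refine M.Y_div_eq_zero_of_not_dvd hu (fun ⟨m, hm⟩ => hc ⟨m, ?_⟩) w
    rw [show (b : ℂ) = j + T * m by exact_mod_cast (by linarith : b = j + T * m)]
    field_simp
  · exact M.latt u c fun m hm => hlat ⟨m, hm⟩

theorem eventually_Y_sub_eq_zero (hT : 0 < T) (v : V) (w : W) (c : ℂ) :
    ∀ᶠ i : ℕ in atTop, M.Y v (c - i) w = 0 := by
  have hT' : (T : ℂ) ≠ 0 := by exact_mod_cast hT.ne'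
  by_cases hlat : ∃ b : ℤ, c = b / T
  · obtain ⟨b, rfl⟩ := hlat
    obtain ⟨N, hN⟩ := M.trunc v w
    filter_upwards [eventually_ge_atTop (b - N).toNat] with i hi
    have hiT : (i : ℤ) ≤ T * i := le_mul_of_one_le_left (by positivity) (by exact_mod_cast hT)
    rw [show (b : ℂ) / T - i = ((b - T * i : ℤ) : ℂ) / T by push_cast; field_simp]
    exact hN _ (by omega)
  · refine Eventually.of_forall fun i => ?_
    rw [M.latt v _ fun m hm => hlat ⟨m + T * i, ?_⟩, LinearMap.zero_apply]
    rw [show c = m / T + i by linear_combination hm]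
    push_cast
    field_simp

theorem Ydual_mem_lowerTrunc (hT : 0 < T) {α : W → ℂ} (hα : α 0 = 0) (v : V) (w : W) :
    Ydual M.Y v α w ∈ lowerTrunc :=
  fun c => (M.eventually_Y_sub_eq_zero hT v w c).mono fun i h => by simp [Ydual, h, hα]

theorem Y_comm (hT : 0 < T) {j : ℤ} {u : V} (hu : eig σ T (-j) u) {b : ℂ} (hb : OnCoset T j b)
    (v : V) (c : ℂ) (w : W) :
    M.Y v c (M.Y u b w)
      = M.Y u b (M.Y v c w) + ∑ᶠ l : ℕ, cbinom b l • M.Y (A.Y u l v) (b + c - l) w := by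
  have hT' : (T : ℂ) ≠ 0 := by exact_mod_cast hT.ne'
  obtain ⟨m, rfl⟩ := hb
  by_cases hlat : ∃ c' : ℤ, c = c' / T
  · obtain ⟨c', rfl⟩ := hlat
    have h := M.jacobi (-j) u hu v w 0 (j + T * m) c'
    rw [if_pos ⟨m, by ring⟩, finsum_eq_single _ 0 fun i hi => ?_] at h
    · simp only [cbinom_zero_right, Int.cast_zero, Nat.cast_zero, zero_add, sub_zero, add_zero,
        pow_zero, zpow_zero, one_mul, one_smul] at h
      rw [show (j : ℂ) / T + m = ((j + T * m : ℤ) : ℂ) / T by push_cast; field_simp]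
      exact sub_eq_iff_eq_add'.1 h
    · have : cbinom 0 i = 0 := by simpa using cbinom_natCast_of_lt (d := 0) (Nat.pos_of_ne_zero hi)
      simp [this]
  · have hv : M.Y v c = 0 := M.latt v c fun c' h => hlat ⟨c', h⟩
    have hl (l : ℕ) : M.Y (A.Y u l v) ((j : ℂ) / T + m + c - l) = 0 :=
      M.latt _ _ fun c' h => hlat ⟨c' - j - T * m + T * l, by
        rw [show c = c' / T - j / T - m + l by linear_combination h]
        push_cast
        field_simp⟩
    simp [hv, hl]

theorem mulXZ_Ydual_Y_comm (hT : 0 < T) {α : W → ℂ} (hα : IsLinearMap ℂ α) {j : ℤ} {u v : V}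
    (hu : eig σ T (-j) u) {b : ℂ} (hb : OnCoset T j b) {L : ℕ}
    (hL : ∀ l, L ≤ l → A.Y u l v = 0) (z ν n₂ : ℂ) (w : W) :
    mulXZ z ν (Ydual M.Y v α (M.Y u b w)) n₂
      = mulXZ z ν (Ydual M.Y v (fun w' => α (M.Y u b w')) w) n₂
        + ∑ l ∈ range L, cbinom b l * mulXZ z ν (Ydual M.Y (A.Y u l v) α w) (b + (n₂ - l)) := by
  have hα0 := hα.map_zero
  have hα_sum (f : ℕ → W) : α (∑ l ∈ range L, f l) = ∑ l ∈ range L, α (f l) :=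
    map_sum (hα.mk' α) f _
  have hpt : Ydual M.Y v α (M.Y u b w) = fun c => Ydual M.Y v (fun w' => α (M.Y u b w')) w c
      + ∑ l ∈ range L, cbinom b l * Ydual M.Y (A.Y u l v) α w (c + (b - l)) := by
    funext c
    rw [Ydual, M.Y_comm hT hu hb, hα.map_add,
      finsum_eq_sum_range_of_forall_le (N := L) fun l hl => by rw [hL l hl]; simp,
      hα_sum]
    simp only [hα.map_smul, smul_eq_mul, Ydual]
    congr 1
    exact sum_congr rfl fun l _ => by ring_nf
  have hmem (l : ℕ) : Ydual M.Y (A.Y u l v) α w ∈ lowerTrunc := M.Ydual_mem_lowerTrunc hT hα0 _ w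
  rw [hpt, mulXZ_add (M.Ydual_mem_lowerTrunc hT (by simp [hα0]) v w)
      (sum_mem_lowerTrunc fun l _ => mul_mem_lowerTrunc _ (comp_add_mem_lowerTrunc (hmem l) _)),
    mulXZ_sum fun l _ => mul_mem_lowerTrunc _ (comp_add_mem_lowerTrunc (hmem l) _)]
  simp only [mulXZ_const_mul, mulXZ_comp_add, add_sub_left_comm n₂]

theorem isLinearMap_mulXZ_Ydual (hT : 0 < T) {α : W → ℂ} (hα : IsLinearMap ℂ α) (v : V)
    (z β n : ℂ) : IsLinearMap ℂ fun w => mulXZ z β (Ydual M.Y v α w) n := by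
  have hmem := M.Ydual_mem_lowerTrunc hT hα.map_zero v
  refine ⟨fun w w' => ?_, fun a w => ?_⟩
  · rw [← mulXZ_add (hmem w) (hmem w')]
    congr 1
    funext c
    simp only [Ydual, map_add, hα.map_add]
  · rw [smul_eq_mul, ← mulXZ_const_mul]
    congr 1
    funext c
    simp only [Ydual, map_smul, hα.map_smul, smul_eq_mul]

theorem mulXZ_Ydual_eq_zero_of_not_onCoset (hT : 0 < T) {α : W → ℂ} (hα : α 0 = 0)
    {r₁ r₂ : ℤ} {v : V} (hv : eig σ T (-(r₁ + r₂)) v) (z : ℂ) (n : ℤ) {n₂ : ℂ}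
    (hn₂ : ¬ OnCoset T r₂ n₂) (w : W) : mulXZ z (n + r₁ / T) (Ydual M.Y v α w) n₂ = 0 :=
  mulXZ_eq_zero fun i => by
    have hi : ¬ OnCoset T (r₁ + r₂) (n₂ + (n + r₁ / T) - i) := fun ⟨q, hq⟩ =>
      hn₂ ⟨q - n + i, by push_cast at hq ⊢; linear_combination hq⟩
    rw [Ydual, M.Y_eq_zero_of_not_onCoset hT hv hi, LinearMap.zero_apply, hα]

end RightTwistedModule

section DCond

variable {V : Type*} [AddCommGroup V] [Module ℂ V] {W : Type*} [AddCommGroup W] [Module ℂ W]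
  {A : VertexAlg V} {σ : VAAut A} {T : ℕ} {z : ℂ} {j₁ j₂ : ℤ} {u : V} {α : W → ℂ}

theorem DCond.mono (M : RightTwistedModule W A σ T) (hT : 0 < T) (hα : α 0 = 0) {k k' : ℕ}
    (h : DCond T z j₁ j₂ M.Y u α k) (hk : k ≤ k') : DCond T z j₁ j₂ M.Y u α k' := by
  obtain ⟨d, rfl⟩ := Nat.exists_eq_add_of_le hk
  have hsplit (n : ℂ) (w : W) : mulXZ z ((k + d : ℕ) + j₁ / T) (Ydual M.Y u α w) n
      = mulXZ z d (mulXZ z (k + j₁ / T) (Ydual M.Y u α w)) n := by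
    rw [mulXZ_mulXZ (M.Ydual_mem_lowerTrunc hT hα u w)]
    push_cast
    ring_nf
  refine ⟨fun n hn w => ?_, ?_⟩
  · rw [hsplit]
    refine mulXZ_natCast_eq_zero fun i _ => ?_
    rw [show n + j₂ / T + d - i = (n + d - i) + j₂ / T by ring]
    exact h.1 _ (fun m hm => hn (m - d + i) (by push_cast; linear_combination hm)) w
  · obtain ⟨N, hN⟩ := h.2
    refine ⟨N, fun m hm w => ?_⟩
    rw [hsplit]
    refine mulXZ_natCast_eq_zero fun i hi => ?_
    rw [show (m : ℂ) + j₂ / T + d - i = ((m + d - i : ℤ) : ℂ) + j₂ / T by push_cast; ring]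
    exact hN _ (by omega) w

theorem DCond.eventually_mulXZ_add_eq_zero {YW : V →ₗ[ℂ] ℂ → W →ₗ[ℂ] W} {k : ℕ}
    (h : DCond T z j₁ j₂ YW u α k) (s : ℂ) :
    ∀ᶠ m : ℤ in atTop, ∀ w, mulXZ z (k + j₁ / T) (Ydual YW u α w) (m + s) = 0 := by
  by_cases hs : OnCoset T j₂ s
  · obtain ⟨p, rfl⟩ := hs
    obtain ⟨N, hN⟩ := h.2
    filter_upwards [eventually_ge_atTop (N - p)] with m hm w
    rw [show (m : ℂ) + (j₂ / T + p) = ((m + p : ℤ) : ℂ) + j₂ / T by push_cast; ring]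
    exact hN _ (by omega) w
  · refine Eventually.of_forall fun m w => ?_
    rw [← sub_add_cancel ((m : ℂ) + s) (j₂ / T)]
    exact h.1 _ (fun q hq => hs ⟨q - m, by push_cast; linear_combination hq⟩) w

end DCond

namespace RightTwistedModule

variable {V : Type*} [AddCommGroup V] [Module ℂ V] {W : Type*} [AddCommGroup W] [Module ℂ W]
  {A : VertexAlg V} {σ : VAAut A} {T : ℕ} (M : RightTwistedModule W A σ T)

theorem mulXZ_Ydual_mulXZ_Ydual_eq (hT : 0 < T) {α : W → ℂ} (hα : IsLinearMap ℂ α) {j : ℤ}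
    {u v : V} (hu : eig σ T (-j) u) {L : ℕ} (hL : ∀ l, L ≤ l → A.Y u l v = 0) {z κ ν X : ℂ}
    (hX : ∀ i : ℕ, OnCoset T j (X + κ - i)) (n₂ : ℂ) (w : W) :
    mulXZ z κ (Ydual M.Y u (fun w' => mulXZ z ν (Ydual M.Y v α w') n₂) w) X
      = mulXZ z ν (fun c => mulXZ z κ (Ydual M.Y u α (M.Y v c w)) X) n₂
        + ∑ l ∈ range L, ∑ p ∈ antidiagonal l, cbinom X p.2 * (cbinom κ p.1 *
          mulXZ z (κ - p.1 + ν) (Ydual M.Y (A.Y u l v) α w) (X + p.1 + (n₂ - l))) := by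
  have hα0 := hα.map_zero
  have hmem (l : ℕ) : (fun b => mulXZ z ν (Ydual M.Y (A.Y u l v) α w) (b + (n₂ - l)))
      ∈ lowerTrunc :=
    comp_add_mem_lowerTrunc (mulXZ_mem_lowerTrunc (M.Ydual_mem_lowerTrunc hT hα0 _ w)) _
  set H : ℂ → ℂ → ℂ := fun b => Ydual M.Y v (fun w' => α (M.Y u b w')) w
  have hH : ∀ c, (fun b => H b c) ∈ lowerTrunc :=
    fun c => M.Ydual_mem_lowerTrunc hT hα0 u _
  have hH' : ∀ᶠ i : ℕ in atTop, ∀ b, H b (n₂ + ν - i) = 0 :=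
    (M.eventually_Y_sub_eq_zero hT v w (n₂ + ν)).mono fun i h b => by simp [H, Ydual, h, hα0]
  have hsplit : mulXZ z κ (Ydual M.Y u (fun w' => mulXZ z ν (Ydual M.Y v α w') n₂) w) X
      = mulXZ z κ (fun b => mulXZ z ν (H b) n₂ + ∑ l ∈ range L,
          cbinom b l * mulXZ z ν (Ydual M.Y (A.Y u l v) α w) (b + (n₂ - l))) X :=
    mulXZ_congr fun i => M.mulXZ_Ydual_Y_comm hT hα hu (hX i) hL z ν n₂ w
  rw [hsplit, mulXZ_add (mulXZ_fun_mem_lowerTrunc hH hH')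
      (sum_mem_lowerTrunc fun l _ => mul_mem_lowerTrunc _ (hmem l)),
    mulXZ_comm hH hH', mulXZ_sum fun l _ => mul_mem_lowerTrunc _ (hmem l)]
  congr 1
  refine sum_congr rfl fun l _ => ?_
  rw [mulXZ_cbinom_mul (hmem l)]
  simp only [mulXZ_comp_add, mulXZ_mulXZ (M.Ydual_mem_lowerTrunc hT hα0 _ w)]

theorem eventually_mulXZ_Ydual_mulXZ_Ydual_eq_zero (hT : 0 < T) {z : ℂ} {α : W → ℂ}
    (hα : IsLinearMap ℂ α) {j₁ j₂ r₁ r₂ n : ℤ} {u v : V} (hu : eig σ T (-(j₁ + j₂)) u)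
    {k L : ℕ} (hL : ∀ l, L ≤ l → A.Y u l v = 0) (hku : DCond T z j₁ j₂ M.Y u α k)
    (hkl : ∀ l ∈ range L, ∀ t ∈ range (l + 1), ∃ k' : ℕ, (k' : ℤ) = k + n - t ∧
      DCond T z (j₁ + r₁) (j₂ + r₂) M.Y (A.Y u l v) α k')
    (n₂ : ℂ) :
    ∀ᶠ m : ℤ in atTop, ∀ w, mulXZ z (k + j₁ / T)
      (Ydual M.Y u (fun w' => mulXZ z (n + r₁ / T) (Ydual M.Y v α w') n₂) w)
      (m + j₂ / T) = 0 := by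
  set κ : ℂ := k + j₁ / T
  set ν : ℂ := n + r₁ / T
  have hcorr : ∀ᶠ m : ℤ in atTop, ∀ l ∈ range L, ∀ p ∈ antidiagonal l, ∀ w,
      mulXZ z (κ - p.1 + ν) (Ydual M.Y (A.Y u l v) α w) (m + (j₂ / T + p.1 + (n₂ - l))) = 0 := by
    refine (eventually_all_finset _).2 fun l hl => (eventually_all_finset _).2 fun p hp => ?_
    obtain ⟨k', hk', hD⟩ := hkl l hl p.1 (mem_range.2 (Nat.antidiagonal.fst_lt hp))
    have hexp : κ - p.1 + ν = k' + ((j₁ + r₁ : ℤ) : ℂ) / T := by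
      rw [show (k' : ℂ) = k + n - p.1 by exact_mod_cast hk']
      push_cast
      ring
    rw [hexp]
    exact hD.eventually_mulXZ_add_eq_zero _
  filter_upwards [hku.eventually_mulXZ_add_eq_zero (j₂ / T), hcorr] with m hfirst hcorr w
  rw [M.mulXZ_Ydual_mulXZ_Ydual_eq hT hα hu hL (fun i => ⟨m + k - i, by push_cast; ring⟩),
    mulXZ_eq_zero fun _ => hfirst _, zero_add]
  refine sum_eq_zero fun l hl => sum_eq_zero fun p hp => ?_
  rw [show (m + j₂ / T : ℂ) + p.1 + (n₂ - l) = m + (j₂ / T + p.1 + (n₂ - l)) by ring,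
    hcorr l hl p hp w, mul_zero, mul_zero]

theorem exists_DCond_mulXZ_Ydual (hT : 0 < T) {σ₁ σ₂ : VAAut A}
    (hσ : ∀ v : V, σ.g (σ₁.g (σ₂.g v)) = v) {z : ℂ} {α : W → ℂ}
    (hα : α ∈ Dspace σ₁ σ₂ T M.Y z) {j₁ j₂ r₁ r₂ : ℤ} {u v : V}
    (hu₁ : eig σ₁ T j₁ u) (hu₂ : eig σ₂ T j₂ u) (hv₁ : eig σ₁ T r₁ v) (hv₂ : eig σ₂ T r₂ v)
    (n : ℤ) :
    ∃ k : ℕ, ∀ n₂ : ℂ,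
      DCond T z j₁ j₂ M.Y u (fun w => mulXZ z (n + r₁ / T) (Ydual M.Y v α w) n₂) k := by
  have hα0 := hα.1.map_zero
  have hu := eig_neg_add_of_comp_eq_id hσ hu₁ hu₂
  obtain ⟨N, hN⟩ := A.trunc u v
  have hL (l : ℕ) (hl : N.toNat ≤ l) : A.Y u l v = 0 := hN l (by omega)
  have hk : ∀ᶠ k : ℕ in atTop, DCond T z j₁ j₂ M.Y u α k ∧
      ∀ l ∈ range N.toNat, ∀ t ∈ range (l + 1), ∃ k' : ℕ, (k' : ℤ) = k + n - t ∧
        DCond T z (j₁ + r₁) (j₂ + r₂) M.Y (A.Y u l v) α k' := by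
    refine (eventually_atTop.2 ?_).and
      ((eventually_all_finset _).2 fun l _ => (eventually_all_finset _).2 fun t _ => ?_)
    · obtain ⟨k₀, h⟩ := hα.2 j₁ j₂ u hu₁ hu₂
      exact ⟨k₀, fun k hk => h.mono M hT hα0 hk⟩
    · obtain ⟨k₀, h⟩ := hα.2 _ _ _ (eig_Y hu₁ hv₁ l) (eig_Y hu₂ hv₂ l)
      exact eventually_atTop.2 ⟨(k₀ + t - n).toNat, fun k hk =>
        ⟨(k + n - t).toNat, by omega, h.mono M hT hα0 (by omega)⟩⟩
  obtain ⟨k, hku, hkl⟩ := hk.exists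
  refine ⟨k, fun n₂ => ⟨fun n₁ hn₁ w => mulXZ_eq_zero fun i => ?_,
    eventually_atTop.1 (M.eventually_mulXZ_Ydual_mulXZ_Ydual_eq_zero hT hα.1 hu hL hku hkl n₂)⟩⟩
  have hi : ¬ OnCoset T (j₁ + j₂) (n₁ + j₂ / T + (k + j₁ / T) - i) := fun ⟨q, hq⟩ =>
    hn₁ (q - k + i) (by push_cast at hq ⊢; linear_combination hq)
  simp [Ydual, M.Y_eq_zero_of_not_onCoset hT hu hi, mulXZ, hα0]

end RightTwistedModule

theorem Dspace_double_truncation_general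
    (V : Type*) [AddCommGroup V] [Module ℂ V] (W : Type*) [AddCommGroup W] [Module ℂ W]
    (A : VertexAlg V) (σ₁ σ₂ σ : VAAut A) (T : ℕ) (hT : 0 < T)
    (hσ : ∀ v : V, σ.g (σ₁.g (σ₂.g v)) = v)
    (z : ℂ)
    (M : RightTwistedModule W A σ T)
    (α : W → ℂ) (hα : α ∈ Dspace σ₁ σ₂ T M.Y z)
    (j₁ j₂ r₁ r₂ : ℤ) (u v : V)
    (hu₁ : eig σ₁ T j₁ u) (hu₂ : eig σ₂ T j₂ u)
    (hv₁ : eig σ₁ T r₁ v) (hv₂ : eig σ₂ T r₂ v)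
    (n : ℤ) :
    (∃ k : ℕ,
      -- the double series `(x₁-z)^{k+j₁/T}(x₂-z)^{n+r₁/T} Y_W^*(u,x₁)Y_W^*(v,x₂)α`,
      -- with `H n₁ n₂ w` the coefficient of `x₁^{-n₁-1} x₂^{-n₂-1}` evaluated at `w`:
      (∀ n₁ n₂ : ℂ,
          ((∀ m : ℤ, n₁ ≠ (j₂ : ℂ) / (T : ℂ) + (m : ℂ)) ∨
            (∀ m : ℤ, n₂ ≠ (r₂ : ℂ) / (T : ℂ) + (m : ℂ))) →
          ∀ w : W,
            (∑ᶠ i : ℕ, cbinom ((k : ℂ) + (j₁ : ℂ) / (T : ℂ)) i * (-z) ^ i *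
              mulXZ z ((n : ℂ) + (r₁ : ℂ) / (T : ℂ))
                (Ydual M.Y v α (M.Y u (n₁ + ((k : ℂ) + (j₁ : ℂ) / (T : ℂ)) - (i : ℂ)) w))
                n₂) = 0) ∧
      (∀ n₂ : ℂ, ∃ N : ℤ, ∀ m : ℤ, N ≤ m → ∀ w : W,
          (∑ᶠ i : ℕ, cbinom ((k : ℂ) + (j₁ : ℂ) / (T : ℂ)) i * (-z) ^ i *
            mulXZ z ((n : ℂ) + (r₁ : ℂ) / (T : ℂ))
              (Ydual M.Y v α (M.Y u (((j₂ : ℂ) / (T : ℂ) + (m : ℂ)) +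
                ((k : ℂ) + (j₁ : ℂ) / (T : ℂ)) - (i : ℂ)) w))
              n₂) = 0)) ∧
    -- furthermore: each coefficient of `x^{r₂/T}(x-z)^{n+r₁/T} Y_W^*(v,x)α` lies in `𝔇`
    (∀ m : ℂ,
      (fun w => mulXZ z ((n : ℂ) + (r₁ : ℂ) / (T : ℂ)) (Ydual M.Y v α w)
          (m + (r₂ : ℂ) / (T : ℂ)))
        ∈ Dspace σ₁ σ₂ T M.Y z) := by
  obtain ⟨k, hk⟩ := M.exists_DCond_mulXZ_Ydual hT hσ hα hu₁ hu₂ hv₁ hv₂ n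
  refine ⟨⟨k, fun n₁ n₂ hoff w => ?_, fun n₂ => ?_⟩, fun m =>
    ⟨M.isLinearMap_mulXZ_Ydual hT hα.1 v z _ _, fun p₁ p₂ s hs₁ hs₂ => ?_⟩⟩
  · rcases hoff with hn₁ | hn₂
    · have h := (hk n₂).1 (n₁ - j₂ / T) (fun m hm => hn₁ m (by linear_combination hm)) w
      rwa [sub_add_cancel] at h
    · have hv := eig_neg_add_of_comp_eq_id hσ hv₁ hv₂
      exact finsum_eq_zero_of_forall_eq_zero fun i => by
        rw [M.mulXZ_Ydual_eq_zero_of_not_onCoset hT hα.1.map_zero hv z n (not_exists.2 hn₂),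
          mul_zero]
  · obtain ⟨N, hN⟩ := (hk n₂).2
    exact ⟨N, fun m hm w => add_comm (m : ℂ) (j₂ / T) ▸ hN m hm w⟩
  · obtain ⟨k', hk'⟩ := M.exists_DCond_mulXZ_Ydual hT hσ hα hs₁ hs₂ hv₁ hv₂ n
    exact ⟨k', hk' _⟩

/-- Lemma 3.4.  Let `α ∈ 𝔇^{(z)}_{σ₁,σ₂}(W)`, `u ∈ V^{(j₁,j₂)}`,
`v ∈ V^{(r₁,r₂)}`, `n ∈ ℤ`.  Then there is `k ∈ ℕ` such that
`(x₁-z)^{k+j₁/T}(x₂-z)^{n+r₁/T} Y_W^*(u,x₁) Y_W^*(v,x₂) α ∈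
x₂^{-r₂/T} x₁^{-j₂/T} W^*((x₁))[[x₂,x₂^{-1}]]`;  moreover every coefficient of
`x^{r₂/T}(x-z)^{n+r₁/T} Y_W^*(v,x)α` lies in `𝔇^{(z)}_{σ₁,σ₂}(W)`. -/
theorem Dspace_double_truncation
    (V : Type*) [AddCommGroup V] [Module ℂ V] (W : Type*) [AddCommGroup W] [Module ℂ W]
    (A : VertexAlg V) (σ₁ σ₂ σ : VAAut A) (T : ℕ) (hT : 0 < T)
    (hσ₁ : ∀ v : V, (⇑σ₁.g)^[T] v = v) (hσ₂ : ∀ v : V, (⇑σ₂.g)^[T] v = v)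
    (hcommAut : ∀ v : V, σ₁.g (σ₂.g v) = σ₂.g (σ₁.g v))
    (hσ : ∀ v : V, σ.g (σ₁.g (σ₂.g v)) = v)
    (z : ℂ) (hz : z ≠ 0)
    (M : RightTwistedModule W A σ T)
    (α : W → ℂ) (hα : α ∈ Dspace σ₁ σ₂ T M.Y z)
    (j₁ j₂ r₁ r₂ : ℤ) (u v : V)
    (hu₁ : eig σ₁ T j₁ u) (hu₂ : eig σ₂ T j₂ u)
    (hv₁ : eig σ₁ T r₁ v) (hv₂ : eig σ₂ T r₂ v)
    (n : ℤ) :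
    (∃ k : ℕ,
      -- the double series `(x₁-z)^{k+j₁/T}(x₂-z)^{n+r₁/T} Y_W^*(u,x₁)Y_W^*(v,x₂)α`,
      -- with `H n₁ n₂ w` the coefficient of `x₁^{-n₁-1} x₂^{-n₂-1}` evaluated at `w`:
      (∀ n₁ n₂ : ℂ,
          ((∀ m : ℤ, n₁ ≠ (j₂ : ℂ) / (T : ℂ) + (m : ℂ)) ∨
            (∀ m : ℤ, n₂ ≠ (r₂ : ℂ) / (T : ℂ) + (m : ℂ))) →
          ∀ w : W,
            (∑ᶠ i : ℕ, cbinom ((k : ℂ) + (j₁ : ℂ) / (T : ℂ)) i * (-z) ^ i *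
              mulXZ z ((n : ℂ) + (r₁ : ℂ) / (T : ℂ))
                (Ydual M.Y v α (M.Y u (n₁ + ((k : ℂ) + (j₁ : ℂ) / (T : ℂ)) - (i : ℂ)) w))
                n₂) = 0) ∧
      (∀ n₂ : ℂ, ∃ N : ℤ, ∀ m : ℤ, N ≤ m → ∀ w : W,
          (∑ᶠ i : ℕ, cbinom ((k : ℂ) + (j₁ : ℂ) / (T : ℂ)) i * (-z) ^ i *
            mulXZ z ((n : ℂ) + (r₁ : ℂ) / (T : ℂ))
              (Ydual M.Y v α (M.Y u (((j₂ : ℂ) / (T : ℂ) + (m : ℂ)) +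
                ((k : ℂ) + (j₁ : ℂ) / (T : ℂ)) - (i : ℂ)) w))
              n₂) = 0)) ∧
    -- furthermore: each coefficient of `x^{r₂/T}(x-z)^{n+r₁/T} Y_W^*(v,x)α` lies in `𝔇`
    (∀ m : ℂ,
      (fun w => mulXZ z ((n : ℂ) + (r₁ : ℂ) / (T : ℂ)) (Ydual M.Y v α w)
          (m + (r₂ : ℂ) / (T : ℂ)))
        ∈ Dspace σ₁ σ₂ T M.Y z) :=
  Dspace_double_truncation_general V W A σ₁ σ₂ σ T hT hσ z M α hα j₁ j₂ r₁ r₂ u v hu₁ hu₂ hv₁ hv₂ n
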